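/- arXiv:1409.4631 — 2 statements merged into one kernel-verified Lean document; each statement's English description precedes it below -/
import Mathlib

section
/- The complete bipartite graph K_{3,3} admits no Pfaffian orientation: for every orientation K of the edges of K_{3,3}, there exist two perfect matchings D and D' of K_{3,3} with ε^K(D) = −ε^K(D'). Equivalently, for every orientation K there is a simple cycle C of even length in K_{3,3} such that K_{3,3} minus the vertices of C admits a perfect matching and n^K(C) is even. -/
/-- The Pfaffian of a `2n × 2n` matrix: the sum over all perfect matchings of
`{0, …, 2n-1}` (each represented by its canonical permutation `σ`) of
`sgn(σ) · a_{σ(0)σ(1)} ⋯ a_{σ(2n-2)σ(2n-1)}`. -/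
def Matrix.pf {R : Type*} [CommRing R] {n : ℕ} (A : Matrix (Fin (2 * n)) (Fin (2 * n)) R) : R :=
  ∑ σ ∈ Finset.univ.filter (fun σ : Equiv.Perm (Fin (2 * n)) =>
      (∀ i : Fin n, σ ⟨2 * i.1, by have := i.2; omega⟩ < σ ⟨2 * i.1 + 1, by have := i.2; omega⟩) ∧
      ∀ i j : Fin n, i < j →
        σ ⟨2 * i.1, by have := i.2; omega⟩ < σ ⟨2 * j.1, by have := j.2; omega⟩),
    ((Equiv.Perm.sign σ : ℤ) : R) * ∏ i : Fin n,
      A (σ ⟨2 * i.1, by have := i.2; omega⟩) (σ ⟨2 * i.1 + 1, by have := i.2; omega⟩)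

/-- A dimer configuration (perfect matching) on a graph `G`. -/
def IsDimerConfig {V : Type*} (G : SimpleGraph V) (D : Finset (Sym2 V)) : Prop :=
  (∀ e ∈ D, e ∈ G.edgeSet) ∧ ∀ v : V, ∃! e, e ∈ D ∧ v ∈ e

/-- The sign `ε^K(D)` of a dimer configuration `D` with respect to an orientation `K`,
defined as the Pfaffian of the `±1`-matrix supported on the edges of `D`. -/
def epsK {n : ℕ} (K : Fin (2 * n) → Fin (2 * n) → Bool)
    (D : Finset (Sym2 (Fin (2 * n)))) : ℤ :=
  Matrix.pf (fun i j => if s(i, j) ∈ D then (if K i j then (1 : ℤ) else -1) else 0)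

/-- The complete bipartite graph `K_{3,3}` on the vertex set `{0,…,5}`, with parts
`{0,1,2}` and `{3,4,5}`. -/
def K33 : SimpleGraph (Fin (2 * 3)) :=
  SimpleGraph.fromRel (fun i j => i.1 < 3 ∧ 3 ≤ j.1)

section Aux

set_option maxRecDepth 100000

instance : DecidableRel K33.Adj := fun v w =>
  decidable_of_iff _ (SimpleGraph.fromRel_adj _ v w).symm

lemma prod3 (K : Fin (2*3) → Fin (2*3) → Bool) (D : Finset (Sym2 (Fin (2*3))))
    (σ : Equiv.Perm (Fin (2*3))) :
    (∏ i : Fin 3, if s(σ ⟨2 * i.1, by have := i.2; omega⟩, σ ⟨2 * i.1 + 1, by have := i.2; omega⟩) ∈ D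
        then (if K (σ ⟨2 * i.1, by have := i.2; omega⟩) (σ ⟨2 * i.1 + 1, by have := i.2; omega⟩) then (1:ℤ) else -1) else 0)
    = (if s(σ 0, σ 1) ∈ D then (if K (σ 0) (σ 1) then (1:ℤ) else -1) else 0)
    * (if s(σ 2, σ 3) ∈ D then (if K (σ 2) (σ 3) then (1:ℤ) else -1) else 0)
    * (if s(σ 4, σ 5) ∈ D then (if K (σ 4) (σ 5) then (1:ℤ) else -1) else 0) := by
  rw [Fin.prod_univ_three]
  rfl

lemma eps_gen (K : Fin (2*3) → Fin (2*3) → Bool) (D : Finset (Sym2 (Fin (2*3))))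
    (a b c : Fin (2*3)) (σ₀ : Equiv.Perm (Fin (2*3))) (s : ℤ)
    (e0 : σ₀ 0 = 0) (e1 : σ₀ 1 = a) (e2 : σ₀ 2 = 1) (e3 : σ₀ 3 = b) (e4 : σ₀ 4 = 2) (e5 : σ₀ 5 = c)
    (lt1 : σ₀ 0 < σ₀ 1) (lt2 : σ₀ 2 < σ₀ 3) (lt3 : σ₀ 4 < σ₀ 5)
    (m1 : s(σ₀ 0, σ₀ 1) ∈ D) (m2 : s(σ₀ 2, σ₀ 3) ∈ D) (m3 : s(σ₀ 4, σ₀ 5) ∈ D)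
    (hs : ((Equiv.Perm.sign σ₀ : ℤ)) = s)
    (key : ∀ σ : Equiv.Perm (Fin (2*3)), σ 0 < σ 1 → σ 2 < σ 3 → σ 4 < σ 5 →
      σ 0 < σ 2 → σ 0 < σ 4 → σ 2 < σ 4 →
      s(σ 0, σ 1) ∈ D → s(σ 2, σ 3) ∈ D → s(σ 4, σ 5) ∈ D → σ = σ₀) :
    epsK K D = s * (if K 0 a then (1:ℤ) else -1) * (if K 1 b then (1:ℤ) else -1) *
      (if K 2 c then (1:ℤ) else -1) := by
  have lt02 : σ₀ 0 < σ₀ 2 := by rw [e0, e2]; decide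
  have lt04 : σ₀ 0 < σ₀ 4 := by rw [e0, e4]; decide
  have lt24 : σ₀ 2 < σ₀ 4 := by rw [e2, e4]; decide
  simp only [epsK, Matrix.pf]
  refine (Finset.sum_eq_single σ₀ ?_ ?_).trans ?_
  · intro σ hσ hne
    rw [Finset.mem_filter] at hσ
    obtain ⟨-, h1, h2⟩ := hσ
    rw [prod3 K D σ]
    by_cases q1 : s(σ 0, σ 1) ∈ D
    · by_cases q2 : s(σ 2, σ 3) ∈ D
      · by_cases q3 : s(σ 4, σ 5) ∈ D
        · exact absurd (key σ (h1 0) (h1 1) (h1 2) (h2 0 1 (by decide)) (h2 0 2 (by decide))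
            (h2 1 2 (by decide)) q1 q2 q3) hne
        · simp [q3]
      · simp [q2]
    · simp [q1]
  · intro h
    exfalso
    refine h (Finset.mem_filter.mpr ⟨Finset.mem_univ _, fun i => ?_, fun i j hij => ?_⟩)
    · fin_cases i
      · exact lt1
      · exact lt2
      · exact lt3
    · fin_cases i <;> fin_cases j <;> first
        | exact absurd hij (by decide)
        | exact lt02
        | exact lt04
        | exact lt24
  · rw [prod3 K D σ₀]
    simp only [e0, e1, e2, e3, e4, e5] at m1 m2 m3 ⊢
    rw [Int.cast_id, hs, if_pos m1, if_pos m2, if_pos m3]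
    ring

def D1 : Finset (Sym2 (Fin (2*3))) := {s(0,3), s(1,4), s(2,5)}
def D2 : Finset (Sym2 (Fin (2*3))) := {s(0,3), s(1,5), s(2,4)}
def D3 : Finset (Sym2 (Fin (2*3))) := {s(0,4), s(1,3), s(2,5)}
def D4 : Finset (Sym2 (Fin (2*3))) := {s(0,4), s(1,5), s(2,3)}
def D5 : Finset (Sym2 (Fin (2*3))) := {s(0,5), s(1,3), s(2,4)}
def D6 : Finset (Sym2 (Fin (2*3))) := {s(0,5), s(1,4), s(2,3)}

def sg1 : Equiv.Perm (Fin (2*3)) := Equiv.mk ![0,3,1,4,2,5] ![0,2,4,1,3,5] (by decide) (by decide)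
def sg2 : Equiv.Perm (Fin (2*3)) := Equiv.mk ![0,3,1,5,2,4] ![0,2,4,1,5,3] (by decide) (by decide)
def sg3 : Equiv.Perm (Fin (2*3)) := Equiv.mk ![0,4,1,3,2,5] ![0,2,4,3,1,5] (by decide) (by decide)
def sg4 : Equiv.Perm (Fin (2*3)) := Equiv.mk ![0,4,1,5,2,3] ![0,2,4,5,1,3] (by decide) (by decide)
def sg5 : Equiv.Perm (Fin (2*3)) := Equiv.mk ![0,5,1,3,2,4] ![0,2,4,3,5,1] (by decide) (by decide)
def sg6 : Equiv.Perm (Fin (2*3)) := Equiv.mk ![0,5,1,4,2,3] ![0,2,4,5,3,1] (by decide) (by decide)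

lemma eps1 (K : Fin (2*3) → Fin (2*3) → Bool) :
    epsK K D1 = (-1 : ℤ) * (if K 0 3 then (1:ℤ) else -1) * (if K 1 4 then (1:ℤ) else -1) *
      (if K 2 5 then (1:ℤ) else -1) :=
  eps_gen K D1 3 4 5 sg1 (-1) rfl rfl rfl rfl rfl rfl (by decide) (by decide) (by decide)
    (by decide) (by decide) (by decide) (by decide) (by decide)

lemma eps2 (K : Fin (2*3) → Fin (2*3) → Bool) :
    epsK K D2 = (1 : ℤ) * (if K 0 3 then (1:ℤ) else -1) * (if K 1 5 then (1:ℤ) else -1) *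
      (if K 2 4 then (1:ℤ) else -1) :=
  eps_gen K D2 3 5 4 sg2 1 rfl rfl rfl rfl rfl rfl (by decide) (by decide) (by decide)
    (by decide) (by decide) (by decide) (by decide) (by decide)

lemma eps3 (K : Fin (2*3) → Fin (2*3) → Bool) :
    epsK K D3 = (1 : ℤ) * (if K 0 4 then (1:ℤ) else -1) * (if K 1 3 then (1:ℤ) else -1) *
      (if K 2 5 then (1:ℤ) else -1) :=
  eps_gen K D3 4 3 5 sg3 1 rfl rfl rfl rfl rfl rfl (by decide) (by decide) (by decide)
    (by decide) (by decide) (by decide) (by decide) (by decide)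

lemma eps4 (K : Fin (2*3) → Fin (2*3) → Bool) :
    epsK K D4 = (-1 : ℤ) * (if K 0 4 then (1:ℤ) else -1) * (if K 1 5 then (1:ℤ) else -1) *
      (if K 2 3 then (1:ℤ) else -1) :=
  eps_gen K D4 4 5 3 sg4 (-1) rfl rfl rfl rfl rfl rfl (by decide) (by decide) (by decide)
    (by decide) (by decide) (by decide) (by decide) (by decide)

lemma eps5 (K : Fin (2*3) → Fin (2*3) → Bool) :
    epsK K D5 = (-1 : ℤ) * (if K 0 5 then (1:ℤ) else -1) * (if K 1 3 then (1:ℤ) else -1) *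
      (if K 2 4 then (1:ℤ) else -1) :=
  eps_gen K D5 5 3 4 sg5 (-1) rfl rfl rfl rfl rfl rfl (by decide) (by decide) (by decide)
    (by decide) (by decide) (by decide) (by decide) (by decide)

lemma eps6 (K : Fin (2*3) → Fin (2*3) → Bool) :
    epsK K D6 = (1 : ℤ) * (if K 0 5 then (1:ℤ) else -1) * (if K 1 4 then (1:ℤ) else -1) *
      (if K 2 3 then (1:ℤ) else -1) :=
  eps_gen K D6 5 4 3 sg6 1 rfl rfl rfl rfl rfl rfl (by decide) (by decide) (by decide)
    (by decide) (by decide) (by decide) (by decide) (by decide)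

lemma dimer1 : IsDimerConfig K33 D1 := ⟨by decide, by simp only [ExistsUnique]; decide⟩
lemma dimer2 : IsDimerConfig K33 D2 := ⟨by decide, by simp only [ExistsUnique]; decide⟩
lemma dimer3 : IsDimerConfig K33 D3 := ⟨by decide, by simp only [ExistsUnique]; decide⟩
lemma dimer4 : IsDimerConfig K33 D4 := ⟨by decide, by simp only [ExistsUnique]; decide⟩
lemma dimer5 : IsDimerConfig K33 D5 := ⟨by decide, by simp only [ExistsUnique]; decide⟩
lemma dimer6 : IsDimerConfig K33 D6 := ⟨by decide, by simp only [ExistsUnique]; decide⟩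

lemma boolkey : ∀ p q r u v w x y z : Bool,
    ((-1 : ℤ) * (if p then (1:ℤ) else -1) * (if v then (1:ℤ) else -1) * (if z then (1:ℤ) else -1) =
      -((1 : ℤ) * (if p then (1:ℤ) else -1) * (if w then (1:ℤ) else -1) * (if y then (1:ℤ) else -1))) ∨
    ((-1 : ℤ) * (if p then (1:ℤ) else -1) * (if v then (1:ℤ) else -1) * (if z then (1:ℤ) else -1) =
      -((1 : ℤ) * (if q then (1:ℤ) else -1) * (if u then (1:ℤ) else -1) * (if z then (1:ℤ) else -1))) ∨
    ((-1 : ℤ) * (if p then (1:ℤ) else -1) * (if v then (1:ℤ) else -1) * (if z then (1:ℤ) else -1) =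
      -((-1 : ℤ) * (if q then (1:ℤ) else -1) * (if w then (1:ℤ) else -1) * (if x then (1:ℤ) else -1))) ∨
    ((-1 : ℤ) * (if p then (1:ℤ) else -1) * (if v then (1:ℤ) else -1) * (if z then (1:ℤ) else -1) =
      -((-1 : ℤ) * (if r then (1:ℤ) else -1) * (if u then (1:ℤ) else -1) * (if y then (1:ℤ) else -1))) ∨
    ((-1 : ℤ) * (if p then (1:ℤ) else -1) * (if v then (1:ℤ) else -1) * (if z then (1:ℤ) else -1) =
      -((1 : ℤ) * (if r then (1:ℤ) else -1) * (if v then (1:ℤ) else -1) * (if x then (1:ℤ) else -1))) := by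
  decide

end Aux

/-- `K_{3,3}` admits no Pfaffian orientation: for every orientation `K` of its edges there
exist two perfect matchings `D`, `D'` with `ε^K(D) = -ε^K(D')`. -/
theorem K33_no_pfaffian_orientation (K : Fin (2 * 3) → Fin (2 * 3) → Bool)
    (hK : ∀ i j, K33.Adj i j → K i j = !K j i) :
    ∃ D D' : Finset (Sym2 (Fin (2 * 3))),
      IsDimerConfig K33 D ∧ IsDimerConfig K33 D' ∧ epsK K D = -epsK K D' := by
  rcases boolkey (K 0 3) (K 0 4) (K 0 5) (K 1 3) (K 1 4) (K 1 5) (K 2 3) (K 2 4) (K 2 5)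
    with h | h | h | h | h
  · exact ⟨D1, D2, dimer1, dimer2, by rw [eps1, eps2]; exact h⟩
  · exact ⟨D1, D3, dimer1, dimer3, by rw [eps1, eps3]; exact h⟩
  · exact ⟨D1, D4, dimer1, dimer4, by rw [eps1, eps4]; exact h⟩
  · exact ⟨D1, D5, dimer1, dimer5, by rw [eps1, eps5]; exact h⟩
  · exact ⟨D1, D6, dimer1, dimer6, by rw [eps1, eps6]; exact h⟩
end

section
/- Let H be a finite-dimensional vector space over ℤ/2ℤ of dimension 2g equipped with a nondegenerate alternating bilinear form B. For each quadratic form q on (H,B), define its Arf invariant Arf(q) ∈ {0,1} by the equality Σ_{x∈H} (−1)^{q(x)} = (−1)^{Arf(q)}·2^g. Then for every α ∈ H, (1/2^g)·Σ_q (−1)^{Arf(q)+q(α)} = 1, where the sum is over all quadratic forms q on (H,B). -/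
/-!
Since `(-1)^{Arf q} = 2^{-g} Σ_x (-1)^{q x}`, the left-hand side is
`2^{-2g} Σ_x Σ_q (-1)^{q x + q α}`. For `x ≠ α` pick `z` with `B (x + α) z = 1`: translating
`q` by the linear form `B (·) z` permutes the quadratic forms and flips the sign of
`(-1)^{q x + q α}`, so the inner sum vanishes. For `x = α` it counts the quadratic forms, which
form a torsor under the dual of `H` (nonempty: `x ↦ U x x` works whenever `B = U - Uᵀ`),
so there are `2^{2g}` of them.
-/

lemma neg_one_pow_val_add {R : Type*} [Ring R] (a b : ZMod 2) :
    (-1 : R) ^ (a + b).val = (-1) ^ a.val * (-1) ^ b.val := by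
  rw [ZMod.val_add, ← neg_one_pow_eq_pow_mod_two, pow_add]

theorem LinearMap.IsAlt.exists_sub_flip_eq {R M : Type*} [CommRing R] [AddCommGroup M]
    [Module R M] [Module.Free R M] {B : M →ₗ[R] M →ₗ[R] R} (hB : B.IsAlt) :
    ∃ U : M →ₗ[R] M →ₗ[R] R, U - U.flip = B := by
  let b := Module.Free.chooseBasis R M
  let : LinearOrder (Module.Free.ChooseBasisIndex R M) := IsWellOrder.linearOrder WellOrderingRel
  refine ⟨b.constr R fun i => b.constr R fun j => if i < j then B (b i) (b j) else 0,
    b.ext fun i => b.ext fun j => ?_⟩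
  rcases lt_trichotomy i j with h | rfl | h
  · simp [h, h.not_gt]
  · simp [hB.self_eq_zero]
  · simp [h, h.not_gt, hB.neg]

abbrev QuadraticRefinement {R M : Type*} [CommRing R] [AddCommGroup M] [Module R M]
    (B : M →ₗ[R] M →ₗ[R] R) : Type _ :=
  {q : M → R // ∀ x y, q (x + y) = q x + q y + B x y}

namespace QuadraticRefinement

section CommRing

variable {R M : Type*} [CommRing R] [AddCommGroup M] [Module R M] {B : M →ₗ[R] M →ₗ[R] R}

instance : AddAction (M →+ R) (QuadraticRefinement B) where
  vadd φ q := ⟨φ + q.1, fun x y => by simp only [Pi.add_apply, map_add, q.2]; ring⟩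
  zero_vadd q := Subtype.ext <| funext fun x => zero_add (q.1 x)
  add_vadd φ ψ q := Subtype.ext <| funext fun x => add_assoc (φ x) (ψ x) (q.1 x)

@[simp]
lemma coe_vadd (φ : M →+ R) (q : QuadraticRefinement B) : (φ +ᵥ q).1 = φ + q.1 := rfl

lemma vadd_left_bijective (q₀ : QuadraticRefinement B) :
    Function.Bijective fun φ : M →+ R => φ +ᵥ q₀ := by
  refine ⟨fun φ ψ h => ?_, fun q => ?_⟩
  · ext x
    simpa using congrFun (congrArg Subtype.val h) x
  · refine ⟨AddMonoidHom.mk' (q.1 - q₀.1) fun x y => ?_, Subtype.ext ?_⟩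
    · simp only [Pi.sub_apply, q.2, q₀.2]; ring
    · ext x; simp

end CommRing

section ZModTwo

variable {M : Type*} [AddCommGroup M] [Module (ZMod 2) M] {B : M →ₗ[ZMod 2] M →ₗ[ZMod 2] ZMod 2}

lemma nonempty (hB : B.IsAlt) : Nonempty (QuadraticRefinement B) := by
  obtain ⟨U, hU⟩ := hB.exists_sub_flip_eq
  refine ⟨⟨fun x => U x x, fun x y => ?_⟩⟩
  simp only [map_add, LinearMap.add_apply, ← hU, LinearMap.sub_apply, LinearMap.flip_apply,
    ZModModule.sub_eq_add]
  ring

lemma natCard_eq [Module.Finite (ZMod 2) M] (hB : B.IsAlt) :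
    Nat.card (QuadraticRefinement B) = Nat.card M := by
  obtain ⟨q₀⟩ := nonempty hB
  calc Nat.card (QuadraticRefinement B)
      = Nat.card (M →+ ZMod 2) := (Nat.card_congr (.ofBijective _ (vadd_left_bijective q₀))).symm
    _ = Nat.card (Module.Dual (ZMod 2) M) :=
      Nat.card_congr (AddMonoidHom.toZModLinearMapEquiv 2).toEquiv
    _ = Nat.card M := Nat.card_congr (Module.finBasis (ZMod 2) M).toDualEquiv.toEquiv.symm

lemma sum_neg_one_pow_val_add_eq_zero [Fintype (QuadraticRefinement B)]
    (hB : ∀ x, (∀ y, B x y = 0) → x = 0) {x y : M} (hxy : x ≠ y) :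
    ∑ q : QuadraticRefinement B, (-1 : ℝ) ^ (q.1 x + q.1 y).val = 0 := by
  have hne : x + y ≠ 0 := by rwa [← ZModModule.sub_eq_add, sub_ne_zero]
  obtain ⟨z, hz⟩ : ∃ z, B (x + y) z = 1 := by
    by_contra! h
    exact hne (hB _ fun z => (by decide : ∀ a : ZMod 2, a ≠ 1 → a = 0) _ (h z))
  let σ : Equiv.Perm (QuadraticRefinement B) := AddAction.toPerm (B.flip z).toAddMonoidHom
  have hσ (q : QuadraticRefinement B) :
      (-1 : ℝ) ^ ((σ q).1 x + (σ q).1 y).val = -(-1) ^ (q.1 x + q.1 y).val := by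
    have : (σ q).1 x + (σ q).1 y = q.1 x + q.1 y + B (x + y) z := by
      simp only [σ, AddAction.toPerm_apply, coe_vadd, LinearMap.toAddMonoidHom_coe, Pi.add_apply,
        LinearMap.flip_apply, map_add, LinearMap.add_apply]
      ring
    rw [this, neg_one_pow_val_add (q.1 x + q.1 y), hz, ZMod.val_one, pow_one, mul_neg_one]
  have hS := calc ∑ q : QuadraticRefinement B, (-1 : ℝ) ^ (q.1 x + q.1 y).val
      = ∑ q : QuadraticRefinement B, (-1 : ℝ) ^ ((σ q).1 x + (σ q).1 y).val :=
        (Equiv.sum_comp σ fun q => (-1 : ℝ) ^ (q.1 x + q.1 y).val).symm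
    _ = -∑ q : QuadraticRefinement B, (-1 : ℝ) ^ (q.1 x + q.1 y).val := by
        simp only [hσ, Finset.sum_neg_distrib]
  exact CharZero.eq_neg_self_iff.mp hS

lemma sum_neg_one_pow_val_add_val_eq_ite [DecidableEq M] [Fintype (QuadraticRefinement B)]
    (hB : ∀ x, (∀ y, B x y = 0) → x = 0) (x y : M) :
    ∑ q : QuadraticRefinement B, (-1 : ℝ) ^ ((q.1 x).val + (q.1 y).val) =
      if x = y then (Nat.card (QuadraticRefinement B) : ℝ) else 0 := by
  split_ifs with h
  · subst h
    simp [Even.neg_one_pow (Even.add_self _), Nat.card_eq_fintype_card]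
  · simp_rw [pow_add, ← neg_one_pow_val_add]
    exact sum_neg_one_pow_val_add_eq_zero hB h

end ZModTwo

end QuadraticRefinement

open scoped Classical in
/-- Let `H` be a `2g`-dimensional vector space over `ℤ/2ℤ` with a nondegenerate alternating
bilinear form `B`. For each quadratic form `q` on `(H, B)` (i.e. each `q` with
`q(x+y) = q(x) + q(y) + B(x,y)`), let `Arf q ∈ ℤ/2ℤ` be defined by the equality
`Σ_{x ∈ H} (-1)^{q(x)} = (-1)^{Arf q} · 2^g`. Then for every `α ∈ H`,
`(1/2^g) Σ_q (-1)^{Arf(q) + q(α)} = 1`, the sum being over all quadratic forms on `(H, B)`. -/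
theorem sum_over_quadratic_forms (g : ℕ) (H : Type*) [AddCommGroup H]
    [Module (ZMod 2) H] [Fintype H] (hdim : Module.finrank (ZMod 2) H = 2 * g)
    (B : H →ₗ[ZMod 2] H →ₗ[ZMod 2] ZMod 2)
    (halt : ∀ x : H, B x x = 0)
    (hnondeg : ∀ x : H, (∀ y : H, B x y = 0) → x = 0)
    (Arf : {q : H → ZMod 2 // ∀ x y : H, q (x + y) = q x + q y + B x y} → ZMod 2)
    (hArf : ∀ q : {q : H → ZMod 2 // ∀ x y : H, q (x + y) = q x + q y + B x y},
      (∑ x : H, (-1 : ℝ) ^ (q.1 x).val) = (-1 : ℝ) ^ (Arf q).val * 2 ^ g)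
    (α : H) :
    (1 / 2 ^ g : ℝ) *
      ∑ q : {q : H → ZMod 2 // ∀ x y : H, q (x + y) = q x + q y + B x y},
        (-1 : ℝ) ^ ((Arf q).val + (q.1 α).val) = 1 := by
  have hcard : (Nat.card (QuadraticRefinement B) : ℝ) = 2 ^ g * 2 ^ g := by
    rw [QuadraticRefinement.natCard_eq halt, Module.natCard_eq_pow_finrank (K := ZMod 2), hdim,
      Nat.card_zmod]
    push_cast
    ring
  have hsummand (q : QuadraticRefinement B) : (-1 : ℝ) ^ ((Arf q).val + (q.1 α).val) =
      (2 ^ g)⁻¹ * ∑ x, (-1 : ℝ) ^ ((q.1 x).val + (q.1 α).val) := by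
    simp_rw [pow_add, ← Finset.sum_mul, hArf q]
    field_simp
  rw [Finset.sum_congr rfl fun q _ => hsummand q, ← Finset.mul_sum, Finset.sum_comm]
  simp only [QuadraticRefinement.sum_neg_one_pow_val_add_val_eq_ite hnondeg, Finset.sum_ite_eq',
    Finset.mem_univ, if_true, hcard]
  field_simp
end
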